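/- arXiv:2006.02316 — 2 statements merged into one kernel-verified Lean document; each statement's English description precedes it below -/
import Mathlib

section
/- Let p be a prime and f : ℤ_p → ℤ_p a 1-Lipschitz function, and let S(f) denote the set of all sections of f at vertices (k, m) with k ≥ 0 and 0 ≤ m < p^k. Then S(f) is finite if and only if both of the following hold: (a) the set { b^f_n : n ≥ 0 } of reduced van der Put coefficients of f is finite and every b^f_n has an eventually periodic digit expansion; (b) the p-kernel of the sequence n ↦ b^f_n is finite (i.e. the sequence of reduced van der Put coefficients is p-automatic). -/
/-- The van der Put coefficients of `f : ℤ_p → ℤ_p`: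
`B^f_n = f(n)` for `0 ≤ n < p` and `B^f_n = f(n) - f(n mod p^⌊log_p n⌋)` for `n ≥ p`. -/
noncomputable def vdpB (p : ℕ) [Fact p.Prime] (f : PadicInt p → PadicInt p) (n : ℕ) :
    PadicInt p :=
  if n < p then f n else f n - f ((n % p ^ Nat.log p n : ℕ))

/-- `h` is the section of `f` at the vertex `(k, m)`: for some integer `0 ≤ r < p^k`,
`f(m + p^k·y) = r + p^k·h(y)` for all `y ∈ ℤ_p`. -/
def IsSection (p : ℕ) [Fact p.Prime] (f h : PadicInt p → PadicInt p) (k m : ℕ) : Prop :=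
  ∃ r : ℕ, r < p ^ k ∧ ∀ y : PadicInt p,
    f ((m : PadicInt p) + (p : PadicInt p) ^ k * y)
      = (r : PadicInt p) + (p : PadicInt p) ^ k * h y

/-- The set `S(f)` of all sections of `f` at vertices `(k, m)`, `k ≥ 0`, `0 ≤ m < p^k`. -/
def SectionsSet (p : ℕ) [Fact p.Prime] (f : PadicInt p → PadicInt p) :
    Set (PadicInt p → PadicInt p) :=
  {h | ∃ k m : ℕ, m < p ^ k ∧ IsSection p f h k m}

/-- `x ∈ ℤ_p` has an eventually periodic digit expansion. -/
def HasEventuallyPeriodicDigits (p : ℕ) [Fact p.Prime] (x : PadicInt p) : Prop :=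
  ∃ a : ℕ → ℕ, (∀ i, a i < p) ∧
    x = (∑' i : ℕ, (a i : PadicInt p) * (p : PadicInt p) ^ i) ∧
    ∃ l m : ℕ, 1 ≤ m ∧ ∀ i : ℕ, l ≤ i → a (i + m) = a i

/-- The `p`-kernel of a sequence `a : ℕ → A`: all sequences `n ↦ a (j + n·p^i)` with
`i ≥ 0` and `0 ≤ j < p^i`. -/
def pKernel (p : ℕ) {A : Type*} (a : ℕ → A) : Set (ℕ → A) :=
  {s | ∃ i j : ℕ, j < p ^ i ∧ s = fun n => a (j + n * p ^ i)}

/-!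
The section of `f` at `(k, m)` is `h y = shift k (f (m + p^k y))`, where `shift k` drops the first
`k` digits. Along the subtree rooted at `(k, m)` the van der Put recursion
`f n = f n₋ + p^(log_p n) b n` becomes `h n = h n₋ + p^(log_p n) b (m + n p^k)`, so the section
and the kernel sequence `n ↦ b (m + n p^k)` determine each other, given `b m`, resp. `h 0`, and
whether `k = 0` (continuity of `h` and density of `ℕ` in `ℤ_p` do the rest).

Forward: every `b N` is `h d` or `h d - h 0` for a section `h` and a digit `d`, so there are
finitely many; the shifts of `h d` are again values of sections at naturals `≤ d`, and shifting a
difference only borrows `0` or `1`, so each `b N` has finitely many shifts, i.e. eventually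
periodic digits.

Backward: eventually periodic digits make the finitely many `b n` rationals with a common
denominator `V` and bounded numerators. Summing the recursion gives `|V f n| ≤ B (n + 1)`, hence the
values `h 0 = shift k (f m)` with `m < p^k` have numerators bounded by `B + |V|`, and so range
over a finite set.
-/

namespace Nat

lemma add_pow_mul_lt_pow_add {p m a k j : ℕ} (hm : m < p ^ k) (ha : a < p ^ j) :
    m + p ^ k * a < p ^ (k + j) := by
  calc m + p ^ k * a < p ^ k * (a + 1) := by linarith
    _ ≤ p ^ k * p ^ j := Nat.mul_le_mul_left _ ha
    _ = p ^ (k + j) := (pow_add p k j).symm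

lemma log_add_mul_pow {p k m n : ℕ} (hp : 1 < p) (hm : m < p ^ k) (hn : n ≠ 0) :
    log p (m + n * p ^ k) = k + log p n := by
  refine log_eq_of_pow_le_of_lt_pow ?_ ?_
  · calc p ^ (k + log p n) = p ^ log p n * p ^ k := by rw [pow_add, mul_comm]
      _ ≤ n * p ^ k := Nat.mul_le_mul_right _ (pow_log_le_self p hn)
      _ ≤ m + n * p ^ k := le_add_self
  · calc m + n * p ^ k < (n + 1) * p ^ k := by linarith
      _ ≤ p ^ (log p n + 1) * p ^ k := Nat.mul_le_mul_right _ (lt_pow_succ_log_self hp n)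
      _ = p ^ (k + log p n + 1) := by rw [← pow_add]; ring_nf

lemma add_mul_pow_mod_pow_add {p k m n : ℕ} (hm : m < p ^ k) (l : ℕ) :
    (m + n * p ^ k) % p ^ (k + l) = m + n % p ^ l * p ^ k := by
  have hpos : 0 < p ^ k := by omega
  rw [pow_add, mod_mul, add_mul_mod_self_right, mod_eq_of_lt hm, add_mul_div_right _ _ hpos,
    div_eq_of_lt hm, zero_add, mul_comm]

lemma mod_pow_log_lt {p n : ℕ} (hn : n ≠ 0) : n % p ^ log p n < n := by
  have hq : 0 < p ^ log p n := by
    rcases p.eq_zero_or_pos with rfl | hp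
    · simp [log_zero_left]
    · positivity
  exact (mod_lt n hq).trans_le (pow_log_le_self p hn)

end Nat

theorem Set.Finite.image_of_factor {α β γ : Type*} {s : Set α} {σ : α → β} {κ : α → γ}
    (hs : (σ '' s).Finite) (h : ∀ a ∈ s, ∀ b ∈ s, σ a = σ b → κ a = κ b) :
    (κ '' s).Finite := by
  rcases s.eq_empty_or_nonempty with rfl | ⟨a₀, -⟩
  · simp
  have : Nonempty α := ⟨a₀⟩
  refine (hs.image fun b => κ (Function.invFunOn σ s b)).subset ?_
  rintro _ ⟨a, ha, rfl⟩
  have hex : ∃ a' ∈ s, σ a' = σ a := ⟨a, ha, rfl⟩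
  exact ⟨σ a, ⟨a, ha, rfl⟩, h _ (Function.invFunOn_mem hex) _ ha (Function.invFunOn_eq hex)⟩

section CommonDenominator

variable {R : Type*} [CommRing R]

theorem Set.Finite.exists_common_denominator {s : Set R} (hs : s.Finite)
    (h : ∀ x ∈ s, ∃ v : ℤ, v ≠ 0 ∧ ∃ u : ℤ, (v : R) * x = u) :
    ∃ V : ℤ, V ≠ 0 ∧ ∃ B : ℤ, ∀ x ∈ s, ∃ u : ℤ, (V : R) * x = u ∧ |u| ≤ B := by
  induction s, hs using Set.Finite.induction_on with
  | empty => exact ⟨1, one_ne_zero, 0, by simp⟩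
  | @insert a s _ _ ih =>
    obtain ⟨V, hV, B, hB⟩ := ih fun x hx => h x (Set.mem_insert_of_mem a hx)
    obtain ⟨v, hv, u, hu⟩ := h a (Set.mem_insert a s)
    refine ⟨v * V, mul_ne_zero hv hV, max |V * u| (|v| * B), ?_⟩
    rintro x (rfl | hx)
    · exact ⟨V * u, by push_cast; rw [← hu]; ring, le_max_left _ _⟩
    · obtain ⟨w, hw, hwB⟩ := hB x hx
      refine ⟨v * w, by push_cast; rw [← hw]; ring, le_max_of_le_right ?_⟩
      rw [abs_mul]
      exact mul_le_mul_of_nonneg_left hwB (abs_nonneg v)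

theorem finite_setOf_intCast_mul_eq [IsDomain R] [CharZero R] {V : ℤ} (hV : V ≠ 0) (M : ℤ) :
    {x : R | ∃ u : ℤ, (V : R) * x = u ∧ |u| ≤ M}.Finite := by
  refine Set.Finite.of_finite_image (f := fun x => (V : R) * x)
    (((Set.finite_Icc (-M) M).image Int.cast).subset ?_) ?_
  · rintro _ ⟨x, ⟨u, hu, huM⟩, rfl⟩
    exact ⟨u, abs_le.mp huM, hu.symm⟩
  · intro x _ y _ hxy
    exact mul_left_cancel₀ (Int.cast_ne_zero.mpr hV) hxy

end CommonDenominator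

namespace PadicInt

variable {p : ℕ} [hp : Fact p.Prime]

lemma natCast_pow_ne_zero (k : ℕ) : (p : ℤ_[p]) ^ k ≠ 0 :=
  pow_ne_zero _ (Nat.cast_ne_zero.mpr hp.out.ne_zero)

lemma pow_dvd_iff_norm_le {k : ℕ} {x : ℤ_[p]} :
    (p : ℤ_[p]) ^ k ∣ x ↔ ‖x‖ ≤ (p : ℝ) ^ (-k : ℤ) := by
  rw [norm_le_pow_iff_mem_span_pow, Ideal.mem_span_singleton]

lemma appr_eq_of_pow_dvd_sub {x : ℤ_[p]} {k r : ℕ} (hr : r < p ^ k)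
    (h : (p : ℤ_[p]) ^ k ∣ x - r) : x.appr k = r := by
  have hcongr := zmod_congr_of_sub_mem_span k x _ _ (x.appr_spec k)
    (Ideal.mem_span_singleton.mpr h)
  rwa [ZMod.natCast_eq_natCast_iff', Nat.mod_eq_of_lt (x.appr_lt k), Nat.mod_eq_of_lt hr] at hcongr

lemma appr_eq_appr_of_pow_dvd_sub {x y : ℤ_[p]} {k : ℕ} (h : (p : ℤ_[p]) ^ k ∣ x - y) :
    x.appr k = y.appr k :=
  appr_eq_of_pow_dvd_sub (y.appr_lt k)
    (by simpa using dvd_add h (Ideal.mem_span_singleton.mp (y.appr_spec k)))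

/-- `shift k x = (x - x.appr k) / p ^ k` drops the first `k` digits of `x`. -/
noncomputable def shift (k : ℕ) (x : ℤ_[p]) : ℤ_[p] :=
  (Ideal.mem_span_singleton.mp (x.appr_spec k)).choose

lemma appr_add_pow_mul_shift (k : ℕ) (x : ℤ_[p]) :
    (x.appr k : ℤ_[p]) + (p : ℤ_[p]) ^ k * shift k x = x := by
  rw [shift, ← (Ideal.mem_span_singleton.mp (x.appr_spec k)).choose_spec]
  ring

lemma shift_eq_of_eq_add {x z : ℤ_[p]} {k r : ℕ} (hr : r < p ^ k)
    (h : x = r + (p : ℤ_[p]) ^ k * z) : shift k x = z := by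
  have happr : x.appr k = r := appr_eq_of_pow_dvd_sub hr ⟨z, by rw [h]; ring⟩
  have hx := appr_add_pow_mul_shift k x
  rw [happr] at hx
  exact mul_left_cancel₀ (natCast_pow_ne_zero k) (add_left_cancel (hx.trans h))

lemma shift_zero (x : ℤ_[p]) : shift 0 x = x :=
  shift_eq_of_eq_add (r := 0) (by simp) (by simp)

lemma shift_natCast (k n : ℕ) : shift k (n : ℤ_[p]) = ((n / p ^ k : ℕ) : ℤ_[p]) := by
  refine shift_eq_of_eq_add (Nat.mod_lt n (pow_pos hp.out.pos k)) ?_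
  exact_mod_cast (Nat.mod_add_div n (p ^ k)).symm

lemma appr_add (k j : ℕ) (x : ℤ_[p]) :
    x.appr (k + j) = x.appr k + p ^ k * (shift k x).appr j := by
  refine appr_eq_of_pow_dvd_sub (Nat.add_pow_mul_lt_pow_add (x.appr_lt k) ((shift k x).appr_lt j))
    ⟨shift j (shift k x), ?_⟩
  nth_rewrite 1 [← appr_add_pow_mul_shift k x, ← appr_add_pow_mul_shift j (shift k x)]
  push_cast
  ring

lemma shift_shift (k j : ℕ) (x : ℤ_[p]) : shift j (shift k x) = shift (k + j) x := by
  refine (shift_eq_of_eq_add (Nat.add_pow_mul_lt_pow_add (x.appr_lt k) ((shift k x).appr_lt j))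
    ?_).symm
  nth_rewrite 1 [← appr_add_pow_mul_shift k x, ← appr_add_pow_mul_shift j (shift k x)]
  push_cast
  ring

lemma shift_sub (k : ℕ) (x y : ℤ_[p]) :
    ∃ c ∈ ({0, -1} : Set ℤ_[p]), shift k (x - y) = shift k x - shift k y + c := by
  have hx := appr_add_pow_mul_shift k x
  have hy := appr_add_pow_mul_shift k y
  have hxk := x.appr_lt k
  have hyk := y.appr_lt k
  by_cases hle : y.appr k ≤ x.appr k
  · refine ⟨0, by simp, shift_eq_of_eq_add (r := x.appr k - y.appr k) (by omega) ?_⟩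
    rw [Nat.cast_sub hle]
    linear_combination hy - hx
  · refine ⟨-1, by simp, shift_eq_of_eq_add (r := x.appr k + p ^ k - y.appr k) (by omega) ?_⟩
    rw [Nat.cast_sub (by omega)]
    push_cast
    linear_combination hy - hx

lemma finite_range_shift_sub {x y : ℤ_[p]} (hx : (Set.range fun j => shift j x).Finite)
    (hy : (Set.range fun j => shift j y).Finite) :
    (Set.range fun j => shift j (x - y)).Finite := by
  refine ((hx.image2 (· - ·) hy).image2 (· + ·) (Set.toFinite {0, -1})).subset ?_
  rintro _ ⟨j, rfl⟩
  obtain ⟨c, hc, he⟩ := shift_sub j x y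
  exact ⟨_, ⟨_, ⟨j, rfl⟩, _, ⟨j, rfl⟩, rfl⟩, c, hc, he.symm⟩

noncomputable def digit (i : ℕ) (x : ℤ_[p]) : ℕ := (shift i x).appr 1

lemma digit_lt (i : ℕ) (x : ℤ_[p]) : digit i x < p := by
  simpa [digit] using (shift i x).appr_lt 1

lemma digit_shift (k i : ℕ) (x : ℤ_[p]) : digit i (shift k x) = digit (k + i) x := by
  rw [digit, digit, shift_shift]

lemma appr_eq_sum_digit (x : ℤ_[p]) (n : ℕ) :
    x.appr n = ∑ i ∈ Finset.range n, digit i x * p ^ i := by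
  induction n with
  | zero => simpa using x.appr_lt 0
  | succ n ih => rw [Finset.sum_range_succ, ← ih, appr_add, digit, mul_comm]

lemma summable_natCast_mul_pow (a : ℕ → ℕ) :
    Summable fun i => (a i : ℤ_[p]) * (p : ℤ_[p]) ^ i := by
  have hp1 : (p : ℝ)⁻¹ < 1 := inv_lt_one_of_one_lt₀ (by exact_mod_cast hp.out.one_lt)
  refine Summable.of_norm_bounded (summable_geometric_of_lt_one (by positivity) hp1) fun i => ?_
  rw [norm_mul, norm_pow, norm_p]
  exact mul_le_of_le_one_left (by positivity) (norm_le_one _)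

lemma hasSum_digit (x : ℤ_[p]) :
    HasSum (fun i => (digit i x : ℤ_[p]) * (p : ℤ_[p]) ^ i) x := by
  refine ((summable_natCast_mul_pow _).hasSum_iff_tendsto_nat).mpr ?_
  have hsum : ∀ n, ∑ i ∈ Finset.range n, (digit i x : ℤ_[p]) * (p : ℤ_[p]) ^ i = x.appr n := by
    intro n
    rw [appr_eq_sum_digit]
    push_cast
    rfl
  simp only [hsum]
  rw [tendsto_iff_norm_sub_tendsto_zero]
  refine squeeze_zero (fun _ => norm_nonneg _) (fun n => ?_)
    (tendsto_pow_atTop_nhds_zero_of_lt_one (by positivity)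
      (inv_lt_one_of_one_lt₀ (by exact_mod_cast hp.out.one_lt) : (p : ℝ)⁻¹ < 1))
  rw [inv_pow, ← zpow_natCast, ← zpow_neg, ← pow_dvd_iff_norm_le]
  exact ⟨-shift n x, by linear_combination appr_add_pow_mul_shift n x⟩

lemma tsum_natCast_mul_pow_eq (a : ℕ → ℕ) (l : ℕ) :
    ∑' i, (a i : ℤ_[p]) * (p : ℤ_[p]) ^ i
      = ((∑ i ∈ Finset.range l, a i * p ^ i : ℕ) : ℤ_[p])
        + (p : ℤ_[p]) ^ l * ∑' i, (a (i + l) : ℤ_[p]) * (p : ℤ_[p]) ^ i := by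
  rw [← (summable_natCast_mul_pow a).sum_add_tsum_nat_add l,
    ← (summable_natCast_mul_pow _).tsum_mul_left]
  push_cast
  congr 1
  exact tsum_congr fun i => by ring

end PadicInt

open PadicInt

section PeriodicDigits

variable {p : ℕ} [hp : Fact p.Prime]

lemma hasEventuallyPeriodicDigits_of_finite_range_shift {x : ℤ_[p]}
    (h : (Set.range fun k => shift k x).Finite) : HasEventuallyPeriodicDigits p x := by
  obtain ⟨i, j, hij, heq⟩ :=
    h.exists_lt_map_eq_of_forall_mem (f := fun k => shift k x) Set.mem_range_self
  refine ⟨fun n => digit n x, fun n => digit_lt n x, (hasSum_digit x).tsum_eq.symm,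
    i, j - i, by omega, fun t ht => ?_⟩
  obtain ⟨n, rfl⟩ := Nat.exists_eq_add_of_le ht
  simp only [show i + n + (j - i) = j + n by omega, ← digit_shift, heq]

lemma HasEventuallyPeriodicDigits.exists_intCast_mul_eq {x : ℤ_[p]}
    (h : HasEventuallyPeriodicDigits p x) : ∃ v : ℤ, v ≠ 0 ∧ ∃ u : ℤ, (v : ℤ_[p]) * x = u := by
  obtain ⟨a, -, rfl, l, m, hm, hper⟩ := h
  have hx := tsum_natCast_mul_pow_eq (p := p) a l
  set A := ∑ i ∈ Finset.range l, a i * p ^ i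
  set C := ∑ i ∈ Finset.range m, a (i + l) * p ^ i
  set y := ∑' i, (a (i + l) : ℤ_[p]) * (p : ℤ_[p]) ^ i
  have hy : y = C + (p : ℤ_[p]) ^ m * y := by
    have hperiod : ∀ i, a (i + m + l) = a (i + l) := fun i => by
      rw [add_right_comm]; exact hper _ (by omega)
    simpa only [hperiod] using tsum_natCast_mul_pow_eq (p := p) (fun i => a (i + l)) m
  have hpm : (1 : ℤ) < (p : ℤ) ^ m := by exact_mod_cast Nat.one_lt_pow (by omega) hp.out.one_lt
  refine ⟨p ^ m - 1, by omega, (p ^ m - 1) * A - p ^ l * C, ?_⟩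
  push_cast
  linear_combination ((p : ℤ_[p]) ^ m - 1) * hx - (p : ℤ_[p]) ^ l * hy

end PeriodicDigits

def treeVertices (p : ℕ) : Set (ℕ × ℕ) := {v | v.2 < p ^ v.1}

lemma pKernel_eq_image (p : ℕ) {A : Type*} (a : ℕ → A) :
    pKernel p a = (fun v : ℕ × ℕ => fun n => a (v.2 + n * p ^ v.1)) '' treeVertices p := by
  ext s
  constructor
  · rintro ⟨i, j, hj, rfl⟩
    exact ⟨(i, j), hj, rfl⟩
  · rintro ⟨⟨i, j⟩, hj, rfl⟩
    exact ⟨i, j, hj, rfl⟩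

section Sections

variable {p : ℕ} [hp : Fact p.Prime] {f : ℤ_[p] → ℤ_[p]}

lemma pow_dvd_sub_apply_of_lipschitz (hf : ∀ x y : ℤ_[p], ‖f x - f y‖ ≤ ‖x - y‖) {k : ℕ}
    {x y : ℤ_[p]} (h : (p : ℤ_[p]) ^ k ∣ x - y) : (p : ℤ_[p]) ^ k ∣ f x - f y :=
  pow_dvd_iff_norm_le.mpr ((hf x y).trans (pow_dvd_iff_norm_le.mp h))

noncomputable def sectionAt (f : ℤ_[p] → ℤ_[p]) (k m : ℕ) (y : ℤ_[p]) : ℤ_[p] :=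
  shift k (f (m + (p : ℤ_[p]) ^ k * y))

lemma apply_add_pow_mul_eq (hf : ∀ x y : ℤ_[p], ‖f x - f y‖ ≤ ‖x - y‖) (k m : ℕ) (y : ℤ_[p]) :
    f (m + (p : ℤ_[p]) ^ k * y) = ((f m).appr k : ℤ_[p]) + (p : ℤ_[p]) ^ k * sectionAt f k m y := by
  have happr := appr_eq_appr_of_pow_dvd_sub
    (pow_dvd_sub_apply_of_lipschitz hf (x := m + (p : ℤ_[p]) ^ k * y) (y := m) ⟨y, by ring⟩)
  rw [sectionAt, ← happr, appr_add_pow_mul_shift]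

lemma IsSection.eq_sectionAt {h : ℤ_[p] → ℤ_[p]} {k m : ℕ} (hs : IsSection p f h k m) :
    h = sectionAt f k m := by
  obtain ⟨r, hr, heq⟩ := hs
  exact funext fun y => (shift_eq_of_eq_add hr (heq y)).symm

lemma sectionsSet_eq_image (hf : ∀ x y : ℤ_[p], ‖f x - f y‖ ≤ ‖x - y‖) :
    SectionsSet p f = (fun v : ℕ × ℕ => sectionAt f v.1 v.2) '' treeVertices p := by
  ext h
  constructor
  · rintro ⟨k, m, hm, hs⟩
    exact ⟨(k, m), hm, hs.eq_sectionAt.symm⟩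
  · rintro ⟨⟨k, m⟩, hm, rfl⟩
    exact ⟨k, m, hm, (f m).appr k, (f m).appr_lt k, apply_add_pow_mul_eq hf k m⟩

lemma sectionAt_mem_sectionsSet (hf : ∀ x y : ℤ_[p], ‖f x - f y‖ ≤ ‖x - y‖) {k m : ℕ}
    (hm : m < p ^ k) : sectionAt f k m ∈ SectionsSet p f := by
  rw [sectionsSet_eq_image hf]
  exact ⟨(k, m), hm, rfl⟩

lemma sectionAt_zero_zero : sectionAt f 0 0 = f :=
  funext fun y => by simp [sectionAt, shift_zero]

lemma continuous_sectionAt (hf : ∀ x y : ℤ_[p], ‖f x - f y‖ ≤ ‖x - y‖) (k m : ℕ) :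
    Continuous (sectionAt f k m) := by
  refine LipschitzWith.continuous (K := 1) (LipschitzWith.of_dist_le_mul fun x y => ?_)
  have hpk : 0 < ‖(p : ℤ_[p]) ^ k‖ := norm_pos_iff.mpr (natCast_pow_ne_zero k)
  have hfxy := hf (m + (p : ℤ_[p]) ^ k * x) (m + (p : ℤ_[p]) ^ k * y)
  rw [apply_add_pow_mul_eq hf, apply_add_pow_mul_eq hf, add_sub_add_left_eq_sub,
    add_sub_add_left_eq_sub, ← mul_sub, ← mul_sub, norm_mul, norm_mul] at hfxy
  rw [NNReal.coe_one, one_mul, dist_eq_norm, dist_eq_norm]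
  exact le_of_mul_le_mul_left hfxy hpk

lemma shift_sectionAt (k m j : ℕ) (y : ℤ_[p]) :
    shift j (sectionAt f k m y) = sectionAt f (k + j) (m + p ^ k * y.appr j) (shift j y) := by
  rw [sectionAt, sectionAt, shift_shift]
  congr 2
  nth_rewrite 1 [← appr_add_pow_mul_shift j y]
  push_cast
  ring

lemma range_shift_sectionAt_natCast_subset (hf : ∀ x y : ℤ_[p], ‖f x - f y‖ ≤ ‖x - y‖)
    {k m : ℕ} (hm : m < p ^ k) (d : ℕ) :
    Set.range (fun j => shift j (sectionAt f k m d)) ⊆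
      Set.image2 (fun g (e : ℕ) => g e) (SectionsSet p f) (Set.Iic d) := by
  rintro _ ⟨j, rfl⟩
  dsimp only
  rw [shift_sectionAt, shift_natCast]
  exact ⟨_, sectionAt_mem_sectionsSet hf (Nat.add_pow_mul_lt_pow_add hm ((d : ℤ_[p]).appr_lt j)),
    _, Nat.div_le_self d _, rfl⟩

variable {bf : ℕ → ℤ_[p]}

lemma coeff_eq_of_lt (hbf : ∀ n : ℕ, (p : ℤ_[p]) ^ Nat.log p n * bf n = vdpB p f n) {n : ℕ}
    (hn : n < p) : bf n = f n := by
  simpa [Nat.log_of_lt hn, vdpB, hn] using hbf n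

lemma apply_natCast_eq_add_of_le (hbf : ∀ n : ℕ, (p : ℤ_[p]) ^ Nat.log p n * bf n = vdpB p f n)
    {n : ℕ} (hn : p ≤ n) :
    f n = f (n % p ^ Nat.log p n : ℕ) + (p : ℤ_[p]) ^ Nat.log p n * bf n := by
  rw [hbf n, vdpB, if_neg (by omega)]
  ring

lemma sectionAt_natCast (hf : ∀ x y : ℤ_[p], ‖f x - f y‖ ≤ ‖x - y‖)
    (hbf : ∀ n : ℕ, (p : ℤ_[p]) ^ Nat.log p n * bf n = vdpB p f n) {k m n : ℕ}
    (hm : m < p ^ k) (hn : n ≠ 0) :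
    sectionAt f k m n = if k = 0 ∧ n < p then bf (m + n * p ^ k) else
      sectionAt f k m (n % p ^ Nat.log p n : ℕ)
        + (p : ℤ_[p]) ^ Nat.log p n * bf (m + n * p ^ k) := by
  split_ifs with h
  · obtain ⟨rfl, hnp⟩ := h
    obtain rfl : m = 0 := by simpa using hm
    simp [sectionAt_zero_zero, coeff_eq_of_lt hbf hnp]
  have hN : p ≤ m + n * p ^ k := by
    rcases Nat.eq_zero_or_pos k with rfl | hk
    · simp only [true_and, not_lt] at h
      simpa using h.trans le_add_self
    · calc p = p ^ 1 := (pow_one p).symm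
        _ ≤ p ^ k := Nat.pow_le_pow_right hp.out.pos hk
        _ ≤ n * p ^ k := Nat.le_mul_of_pos_left _ (Nat.pos_of_ne_zero hn)
        _ ≤ m + n * p ^ k := le_add_self
  have hrec := apply_natCast_eq_add_of_le hbf hN
  rw [Nat.log_add_mul_pow hp.out.one_lt hm hn, Nat.add_mul_pow_mod_pow_add hm] at hrec
  have hcast : ∀ d : ℕ, ((m + d * p ^ k : ℕ) : ℤ_[p]) = m + (p : ℤ_[p]) ^ k * d := fun d => by
    push_cast; ring
  rw [hcast, hcast, apply_add_pow_mul_eq hf, apply_add_pow_mul_eq hf] at hrec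
  refine mul_left_cancel₀ (natCast_pow_ne_zero k) ?_
  linear_combination hrec

lemma exists_coeff_eq (hf : ∀ x y : ℤ_[p], ‖f x - f y‖ ≤ ‖x - y‖)
    (hbf : ∀ n : ℕ, (p : ℤ_[p]) ^ Nat.log p n * bf n = vdpB p f n) (N : ℕ) :
    ∃ g ∈ SectionsSet p f, ∃ d < p, bf N = g d ∨ bf N = g d - g 0 := by
  by_cases hN : N < p
  · refine ⟨f, ?_, N, hN, .inl (coeff_eq_of_lt hbf hN)⟩
    simpa [sectionAt_zero_zero] using sectionAt_mem_sectionsSet (f := f) hf (k := 0) (m := 0)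
  set k := Nat.log p N
  have hk : k ≠ 0 := (Nat.log_pos hp.out.one_lt (not_lt.mp hN)).ne'
  have hpk : 0 < p ^ k := pow_pos hp.out.pos k
  have hd : N / p ^ k < p := (Nat.div_lt_iff_lt_mul hpk).mpr
    (by rw [mul_comm, ← pow_succ]; exact Nat.lt_pow_succ_log_self hp.out.one_lt N)
  have hd0 : N / p ^ k ≠ 0 :=
    (Nat.div_pos (Nat.pow_log_le_self p (by have := hp.out.pos; omega)) hpk).ne'
  have hrec := sectionAt_natCast hf hbf (Nat.mod_lt N hpk) hd0
  rw [if_neg fun h => hk h.1, Nat.log_of_lt hd, Nat.mod_add_div'] at hrec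
  simp only [pow_zero, Nat.mod_one, one_mul, Nat.cast_zero] at hrec
  refine ⟨_, sectionAt_mem_sectionsSet hf (Nat.mod_lt N hpk), N / p ^ k, hd, .inr ?_⟩
  rw [hrec]
  ring

lemma finite_range_coeff (hf : ∀ x y : ℤ_[p], ‖f x - f y‖ ≤ ‖x - y‖)
    (hbf : ∀ n : ℕ, (p : ℤ_[p]) ^ Nat.log p n * bf n = vdpB p f n)
    (hS : (SectionsSet p f).Finite) : (Set.range bf).Finite := by
  refine ((hS.image2 (fun g (d : ℕ) => g d) (Set.finite_Iio p)).union
    (hS.image2 (fun g (d : ℕ) => g d - g 0) (Set.finite_Iio p))).subset ?_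
  rintro _ ⟨N, rfl⟩
  obtain ⟨g, hg, d, hd, h | h⟩ := exists_coeff_eq hf hbf N
  · exact .inl ⟨g, hg, d, hd, h.symm⟩
  · exact .inr ⟨g, hg, d, hd, h.symm⟩

lemma finite_range_shift_coeff (hf : ∀ x y : ℤ_[p], ‖f x - f y‖ ≤ ‖x - y‖)
    (hbf : ∀ n : ℕ, (p : ℤ_[p]) ^ Nat.log p n * bf n = vdpB p f n)
    (hS : (SectionsSet p f).Finite) (N : ℕ) : (Set.range fun j => shift j (bf N)).Finite := by
  have hshifts : ∀ g ∈ SectionsSet p f, ∀ d : ℕ, (Set.range fun j => shift j (g d)).Finite := by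
    intro g hg d
    rw [sectionsSet_eq_image hf] at hg
    obtain ⟨⟨k, m⟩, hm, rfl⟩ := hg
    exact (hS.image2 _ (Set.finite_Iic d)).subset (range_shift_sectionAt_natCast_subset hf hm d)
  obtain ⟨g, hg, d, -, h | h⟩ := exists_coeff_eq hf hbf N <;> rw [h]
  · exact hshifts g hg d
  · exact finite_range_shift_sub (hshifts g hg d) (by simpa using hshifts g hg 0)

lemma coeff_add_mul_pow_eq_of_sectionAt_eq (hf : ∀ x y : ℤ_[p], ‖f x - f y‖ ≤ ‖x - y‖)
    (hbf : ∀ n : ℕ, (p : ℤ_[p]) ^ Nat.log p n * bf n = vdpB p f n) {k m k' m' : ℕ}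
    (hm : m < p ^ k) (hm' : m' < p ^ k') (hh : sectionAt f k m = sectionAt f k' m')
    (h0 : bf m = bf m') (hk : k = 0 ↔ k' = 0) (n : ℕ) :
    bf (m + n * p ^ k) = bf (m' + n * p ^ k') := by
  rcases eq_or_ne n 0 with rfl | hn
  · simpa using h0
  have e := sectionAt_natCast hf hbf hm hn
  rw [hh, sectionAt_natCast hf hbf hm' hn] at e
  simp only [hk] at e
  split_ifs at e
  · exact e.symm
  · exact (mul_left_cancel₀ (natCast_pow_ne_zero _) (add_left_cancel e)).symm

lemma finite_pKernel_coeff (hf : ∀ x y : ℤ_[p], ‖f x - f y‖ ≤ ‖x - y‖)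
    (hbf : ∀ n : ℕ, (p : ℤ_[p]) ^ Nat.log p n * bf n = vdpB p f n)
    (hS : (SectionsSet p f).Finite) : (pKernel p bf).Finite := by
  rw [pKernel_eq_image]
  refine Set.Finite.image_of_factor (σ := fun v => (sectionAt f v.1 v.2, bf v.2, v.1 = 0))
    ((hS.prod ((finite_range_coeff hf hbf hS).prod Set.finite_univ)).subset ?_) ?_
  · rintro _ ⟨⟨k, m⟩, hm, rfl⟩
    exact ⟨sectionAt_mem_sectionsSet hf hm, ⟨m, rfl⟩, trivial⟩
  · rintro ⟨k, m⟩ hm ⟨k', m'⟩ hm' heq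
    simp only [Prod.mk.injEq] at heq
    exact funext (coeff_add_mul_pow_eq_of_sectionAt_eq hf hbf hm hm' heq.1 heq.2.1
      (iff_of_eq heq.2.2))

lemma exists_intCast_mul_apply_natCast
    (hbf : ∀ n : ℕ, (p : ℤ_[p]) ^ Nat.log p n * bf n = vdpB p f n) {V B : ℤ}
    (hB : ∀ n, ∃ u : ℤ, (V : ℤ_[p]) * bf n = u ∧ |u| ≤ B) (n : ℕ) :
    ∃ u : ℤ, (V : ℤ_[p]) * f n = u ∧ |u| ≤ B * (n + 1) := by
  induction n using Nat.strong_induction_on with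
  | _ n ih =>
  obtain ⟨w, hw, hwB⟩ := hB n
  have hB0 : 0 ≤ B := (abs_nonneg w).trans hwB
  by_cases hn : n < p
  · refine ⟨w, by rw [← coeff_eq_of_lt hbf hn, hw], ?_⟩
    nlinarith [(n.cast_nonneg : (0 : ℤ) ≤ n)]
  set q := p ^ Nat.log p n
  have hq : q ≤ n := Nat.pow_log_le_self p (by have := hp.out.pos; omega)
  have hqpos : 0 < q := pow_pos hp.out.pos _
  obtain ⟨u, hu, huB⟩ := ih (n % q) ((Nat.mod_lt n hqpos).trans_le hq)
  refine ⟨u + q * w, ?_, ?_⟩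
  · rw [apply_natCast_eq_add_of_le hbf (not_lt.mp hn), mul_add, hu, mul_left_comm, hw]
    push_cast [q]
    ring
  · have hmod : n % q + q ≤ n := by
      have := Nat.mod_add_div n q
      have := Nat.le_mul_of_pos_right q (Nat.div_pos hq hqpos)
      omega
    have hmod' : ((n % q : ℕ) : ℤ) + q ≤ n := by exact_mod_cast hmod
    calc |u + q * w| ≤ |u| + |(q : ℤ) * w| := abs_add_le _ _
      _ = |u| + q * |w| := by rw [abs_mul, Nat.abs_cast]
      _ ≤ B * ((n % q : ℕ) + 1) + q * B := by gcongr
      _ ≤ B * (n + 1) := by nlinarith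

lemma exists_intCast_mul_shift_apply_natCast
    (hbf : ∀ n : ℕ, (p : ℤ_[p]) ^ Nat.log p n * bf n = vdpB p f n) {V B : ℤ}
    (hB : ∀ n, ∃ u : ℤ, (V : ℤ_[p]) * bf n = u ∧ |u| ≤ B) {k m : ℕ} (hm : m < p ^ k) :
    ∃ u : ℤ, (V : ℤ_[p]) * shift k (f m) = u ∧ |u| ≤ B + |V| := by
  obtain ⟨u, hu, huB⟩ := exists_intCast_mul_apply_natCast hbf hB m
  have hsplit := appr_add_pow_mul_shift k (f m)
  obtain ⟨t, ht⟩ := (pow_p_dvd_int_iff k (u - V * (f m).appr k)).mp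
    ⟨(V : ℤ_[p]) * shift k (f m), by push_cast; linear_combination -V * hsplit - hu⟩
  have htp : ((u - V * (f m).appr k : ℤ) : ℤ_[p]) = ((p ^ k * t : ℤ) : ℤ_[p]) := by rw [ht]
  push_cast at htp
  refine ⟨t, mul_left_cancel₀ (natCast_pow_ne_zero k) ?_, ?_⟩
  · linear_combination htp + V * hsplit + hu
  · have hB0 : 0 ≤ B := by
      obtain ⟨w, -, hw⟩ := hB 0
      exact (abs_nonneg w).trans hw
    have hpk : (0 : ℤ) < p ^ k := pow_pos (by exact_mod_cast hp.out.pos) k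
    have hmk : (m : ℤ) + 1 ≤ p ^ k := by exact_mod_cast hm
    have happr : ((f m).appr k : ℤ) ≤ p ^ k := by exact_mod_cast ((f m).appr_lt k).le
    refine le_of_mul_le_mul_left ?_ hpk
    calc (p : ℤ) ^ k * |t| = |u - V * (f m).appr k| := by
          rw [ht, abs_mul, abs_of_pos hpk]
      _ ≤ |u| + |V| * (f m).appr k :=
          (abs_sub _ _).trans_eq (by rw [abs_mul, Nat.abs_cast])
      _ ≤ B * p ^ k + |V| * p ^ k := by
          gcongr
          exact huB.trans (mul_le_mul_of_nonneg_left hmk hB0)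
      _ = p ^ k * (B + |V|) := by ring

lemma sectionAt_eq_of_coeff_eq (hf : ∀ x y : ℤ_[p], ‖f x - f y‖ ≤ ‖x - y‖)
    (hbf : ∀ n : ℕ, (p : ℤ_[p]) ^ Nat.log p n * bf n = vdpB p f n) {k m k' m' : ℕ}
    (hm : m < p ^ k) (hm' : m' < p ^ k') (h0 : sectionAt f k m 0 = sectionAt f k' m' 0)
    (hκ : ∀ n, bf (m + n * p ^ k) = bf (m' + n * p ^ k')) (hk : k = 0 ↔ k' = 0) :
    sectionAt f k m = sectionAt f k' m' := by
  refine denseRange_natCast.equalizer (continuous_sectionAt hf k m)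
    (continuous_sectionAt hf k' m') (funext fun n => ?_)
  induction n using Nat.strong_induction_on with
  | _ n ih =>
  rcases eq_or_ne n 0 with rfl | hn
  · simpa using h0
  simp only [Function.comp_apply] at ih ⊢
  rw [sectionAt_natCast hf hbf hm hn, sectionAt_natCast hf hbf hm' hn, hκ,
    ih _ (Nat.mod_pow_log_lt hn)]
  simp only [hk]

lemma finite_sectionsSet (hf : ∀ x y : ℤ_[p], ‖f x - f y‖ ≤ ‖x - y‖)
    (hbf : ∀ n : ℕ, (p : ℤ_[p]) ^ Nat.log p n * bf n = vdpB p f n)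
    (hR : (Set.range bf).Finite) (hper : ∀ n, HasEventuallyPeriodicDigits p (bf n))
    (hK : (pKernel p bf).Finite) : (SectionsSet p f).Finite := by
  obtain ⟨V, hV, B, hB⟩ := hR.exists_common_denominator (by
    rintro _ ⟨n, rfl⟩
    exact (hper n).exists_intCast_mul_eq)
  rw [sectionsSet_eq_image hf]
  refine Set.Finite.image_of_factor
    (σ := fun v => (sectionAt f v.1 v.2 0, fun n => bf (v.2 + n * p ^ v.1), v.1 = 0))
    (((finite_setOf_intCast_mul_eq hV (B + |V|)).prod (hK.prod Set.finite_univ)).subset ?_) ?_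
  · rintro _ ⟨⟨k, m⟩, hm, rfl⟩
    refine ⟨?_, pKernel_eq_image p bf ▸ ⟨(k, m), hm, rfl⟩, trivial⟩
    simpa [sectionAt] using
      exists_intCast_mul_shift_apply_natCast hbf (fun n => hB _ ⟨n, rfl⟩) hm
  · rintro ⟨k, m⟩ hm ⟨k', m'⟩ hm' heq
    simp only [Prod.mk.injEq] at heq
    exact sectionAt_eq_of_coeff_eq hf hbf hm hm' heq.1 (congrFun heq.2.1) (iff_of_eq heq.2.2)

end Sections

/-- A 1-Lipschitz `f : ℤ_p → ℤ_p` has finitely many sections iff (a) its reduced van der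
Put coefficients form a finite set of elements with eventually periodic digit expansions,
and (b) the sequence of reduced van der Put coefficients is `p`-automatic (finite
`p`-kernel). -/
theorem finite_sections_iff_automatic (p : ℕ) [Fact p.Prime]
    (f : PadicInt p → PadicInt p)
    (hf : ∀ x y : PadicInt p, ‖f x - f y‖ ≤ ‖x - y‖)
    -- `bf` is the sequence of reduced van der Put coefficients of `f`
    (bf : ℕ → PadicInt p)
    (hbf : ∀ n : ℕ, (p : PadicInt p) ^ Nat.log p n * bf n = vdpB p f n) :
    (SectionsSet p f).Finite ↔
      ((Set.range bf).Finite ∧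
        (∀ n : ℕ, HasEventuallyPeriodicDigits p (bf n)) ∧
        (pKernel p bf).Finite) := by
  refine ⟨fun hS => ⟨finite_range_coeff hf hbf hS, fun n =>
    hasEventuallyPeriodicDigits_of_finite_range_shift (finite_range_shift_coeff hf hbf hS n),
    finite_pKernel_coeff hf hbf hS⟩, fun ⟨hR, hper, hK⟩ => finite_sectionsSet hf hbf hR hper hK⟩
end

section
/- Let p be a prime (playing the role of d), let l ≥ 0, m ≥ 1 be integers, and let f : ℤ_p → ℤ_p be a 1-Lipschitz function such that for every n ≥ 0 the reduced van der Put coefficient b^f_n equals the image in ℚ_p of some rational number belonging to P^{l,m}. Then for every k ≥ 0 and every integer m' with 0 ≤ m' < p^k, the section h of f at the vertex (k, m') satisfies: for every integer i with 0 ≤ i < p, the coefficient b^h_i equals the image in ℚ_p of some rational number belonging to A^{l,m}_k. -/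
/-- `P^{l,m} = { i + j·d^l/(1 - d^m) : 0 ≤ i < d^l, 0 ≤ j < d^m } ⊆ ℚ`. -/
def Pset (d l m : ℕ) : Set ℚ :=
  {q | ∃ i j : ℤ, 0 ≤ i ∧ i < (d : ℤ) ^ l ∧ 0 ≤ j ∧ j < (d : ℤ) ^ m ∧
    q = (i : ℚ) + (j : ℚ) * (d : ℚ) ^ l / (1 - (d : ℚ) ^ m)}

/-- `A^{l,m}_0 = P^{l,m}` and `A^{l,m}_{s+1} = σ(A^{l,m}_s) + P^{l,m}`, where
`σ(q) = (q - r)/d` for the unique integer `0 ≤ r < d` with `(q - r)/d ∈ Z_{d,0}`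
(i.e. with denominator coprime to `d`). -/
def Aset (d l m : ℕ) : ℕ → Set ℚ
  | 0 => Pset d l m
  | s + 1 =>
    {q | ∃ a ∈ Aset d l m s, ∃ b ∈ Pset d l m, ∃ r : ℤ, 0 ≤ r ∧ r < (d : ℤ) ∧
      (((a - (r : ℚ)) / (d : ℚ)).den).Coprime d ∧ q = (a - (r : ℚ)) / (d : ℚ) + b}

/-
Sections compose: the section of `f` at `(k + 1, m' + p^k a)` is the section at `(1, a)` of the
section of `f` at `(k, m')`, so it suffices to follow the reduced van der Put coefficients through
one level. If `g` is the section of `f` at `(1, a)` with `a < p`, then `f (a + p n) = r + p g(n)`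
gives `b^g_n = b^f_{a + p n}` for `n ≥ p`, `b^g_0 = g(0) = (b^f_a - r)/p = σ(b^f_a)` and
`b^g_n = σ(b^f_a) + b^f_{a + p n}` for `0 < n < p`. Hence the coefficients of index `≥ p` stay in
`P^{l,m}`, while each level turns the coefficients of index `< p` from `A_s` into `A_{s+1}`;
the digit `r` is the one of the definition of `σ` because `g(0) ∈ ℤ_p` has a denominator prime
to `p`.
-/

lemma Nat.log_add_mul_of_lt {b a n : ℕ} (hb : 1 < b) (ha : a < b) (hn : n ≠ 0) :
    Nat.log b (a + b * n) = Nat.log b n + 1 := by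
  have hdiv : (a + b * n) / b = n := by
    rw [Nat.add_mul_div_left _ _ (by omega), Nat.div_eq_of_lt ha, zero_add]
  have hpos : 0 < Nat.log b (a + b * n) :=
    Nat.log_pos hb <|
      (Nat.le_mul_of_pos_right b (Nat.pos_of_ne_zero hn)).trans (Nat.le_add_left _ _)
  have := Nat.log_div_base b (a + b * n)
  rw [hdiv] at this
  omega

lemma Nat.add_mul_mod_pow_log {b a n : ℕ} (hb : 1 < b) (ha : a < b) (hn : n ≠ 0) :
    (a + b * n) % b ^ Nat.log b (a + b * n) = a + b * (n % b ^ Nat.log b n) := by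
  rw [Nat.log_add_mul_of_lt hb ha hn, pow_succ', Nat.mod_mul, Nat.add_mul_mod_self_left,
    Nat.mod_eq_of_lt ha, Nat.add_mul_div_left _ _ (by omega), Nat.div_eq_of_lt ha, zero_add]

variable {p : ℕ} [hp : Fact p.Prime]

lemma PadicInt.pow_p_ne_zero (k : ℕ) : (p : ℤ_[p]) ^ k ≠ 0 :=
  pow_ne_zero k (Nat.cast_ne_zero.2 hp.out.ne_zero)

lemma PadicInt.natCast_modEq_of_pow_dvd_sub {a b k : ℕ}
    (h : (p : ℤ_[p]) ^ k ∣ (a : ℤ_[p]) - b) : a ≡ b [MOD p ^ k] := by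
  rw [Nat.modEq_iff_dvd]
  have h' : (p : ℤ_[p]) ^ k ∣ (((b : ℤ) - a : ℤ) : ℤ_[p]) := by
    push_cast
    exact dvd_sub_comm.mp h
  have := (PadicInt.norm_le_pow_iff_mem_span_pow _ k).2 (Ideal.mem_span_singleton.2 h')
  exact_mod_cast PadicInt.norm_int_le_pow_iff_dvd.1 this

lemma Padic.coprime_den_of_norm_rat_le_one {q : ℚ} (h : ‖(q : ℚ_[p])‖ ≤ 1) :
    q.den.Coprime p :=
  Nat.coprime_comm.mp <| (Nat.Prime.coprime_iff_not_dvd hp.out).2 <|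
    Rat.padicValuation_le_one_iff.1 ((Padic.norm_rat_le_one_iff_padicValuation_le_one p).1 h)

section Sections

variable {f g h : ℤ_[p] → ℤ_[p]}

lemma IsSection.eq_of_level_zero (hs : IsSection p f h 0 0) : h = f := by
  obtain ⟨r, hr, hrf⟩ := hs
  obtain rfl : r = 0 := by simpa using hr
  funext y
  simpa using (hrf y).symm

lemma exists_isSection (hf : ∀ x y, ‖f x - f y‖ ≤ ‖x - y‖) (k m : ℕ) :
    ∃ h, IsSection p f h k m := by
  have hdvd : ∀ y : ℤ_[p], (p : ℤ_[p]) ^ k ∣ f (m + p ^ k * y) - ((f m).appr k : ℕ) := by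
    intro y
    have hclose : (p : ℤ_[p]) ^ k ∣ f (m + p ^ k * y) - f m := by
      rw [← Ideal.mem_span_singleton, ← PadicInt.norm_le_pow_iff_mem_span_pow]
      calc ‖f (m + p ^ k * y) - f m‖ ≤ ‖(p : ℤ_[p]) ^ k * y‖ := by
            simpa using hf (m + p ^ k * y) m
        _ ≤ ‖(p : ℤ_[p]) ^ k‖ := by
            rw [norm_mul]
            exact mul_le_of_le_one_right (norm_nonneg _) (PadicInt.norm_le_one y)
        _ = _ := PadicInt.norm_p_pow k
    simpa using dvd_add hclose (Ideal.mem_span_singleton.1 ((f m).appr_spec k))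
  choose h hh using hdvd
  exact ⟨h, (f m).appr k, (f m).appr_lt k, fun y => by linear_combination hh y⟩

lemma IsSection.isSection_of_add_mul {k j c a : ℕ} (hg : IsSection p f g k c)
    (hh : IsSection p f h (k + j) (c + p ^ k * a)) : IsSection p g h j a := by
  obtain ⟨r₀, hr₀, hg⟩ := hg
  obtain ⟨r, hr, hh⟩ := hh
  have key : ∀ y : ℤ_[p], (r₀ : ℤ_[p]) + p ^ k * g (a + p ^ j * y)
      = r + p ^ k * (p ^ j * h y) := fun y => by
    calc (r₀ : ℤ_[p]) + p ^ k * g (a + p ^ j * y) = f (c + p ^ k * (a + p ^ j * y)) :=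
          (hg _).symm
      _ = f ((c + p ^ k * a : ℕ) + p ^ (k + j) * y) := by push_cast; ring_nf
      _ = r + p ^ k * (p ^ j * h y) := by rw [hh, pow_add, mul_assoc]
  have hmod : r % p ^ k = r₀ := by
    have h0 := key 0
    rw [mul_zero, add_zero] at h0
    have hcong : r ≡ r₀ [MOD p ^ k] :=
      PadicInt.natCast_modEq_of_pow_dvd_sub ⟨g a - p ^ j * h 0, by linear_combination -h0⟩
    rwa [Nat.ModEq, Nat.mod_eq_of_lt hr₀] at hcong
  have hr' : (r : ℤ_[p]) = r₀ + p ^ k * (r / p ^ k : ℕ) := by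
    rw [← hmod]
    exact_mod_cast (Nat.mod_add_div r (p ^ k)).symm
  refine ⟨r / p ^ k, Nat.div_lt_of_lt_mul (by rwa [← pow_add]), fun y => ?_⟩
  apply mul_left_cancel₀ (PadicInt.pow_p_ne_zero k)
  linear_combination key y + hr'

end Sections

lemma vdpB_of_lt {f : ℤ_[p] → ℤ_[p]} {n : ℕ} (hn : n < p) : vdpB p f n = f n :=
  if_pos hn

lemma vdpB_of_le {f : ℤ_[p] → ℤ_[p]} {n : ℕ} (hn : p ≤ n) :
    vdpB p f n = f n - f ((n % p ^ Nat.log p n : ℕ)) :=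
  if_neg (not_lt.2 hn)

lemma eq_of_pow_log_mul_eq_vdpB {f : ℤ_[p] → ℤ_[p]} {b b' : ℕ → ℤ_[p]}
    (hb : ∀ n, (p : ℤ_[p]) ^ Nat.log p n * b n = vdpB p f n)
    (hb' : ∀ n, (p : ℤ_[p]) ^ Nat.log p n * b' n = vdpB p f n) : b = b' :=
  funext fun n => mul_left_cancel₀ (PadicInt.pow_p_ne_zero _) ((hb n).trans (hb' n).symm)

section FirstLevel

variable {f g : ℤ_[p] → ℤ_[p]} {bf : ℕ → ℤ_[p]} {a : ℕ}

lemma IsSection.exists_vdp_coeff_eq (hs : IsSection p f g 1 a) (ha : a < p)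
    (hbf : ∀ n, (p : ℤ_[p]) ^ Nat.log p n * bf n = vdpB p f n) :
    ∃ r < p, bf a = r + p * g 0 := by
  obtain ⟨r, hr, hrf⟩ := hs
  refine ⟨r, by simpa using hr, ?_⟩
  have := hbf a
  rw [Nat.log_of_lt ha, pow_zero, one_mul, vdpB_of_lt ha] at this
  simpa [this] using hrf 0

lemma IsSection.pow_log_mul_vdp_coeff_eq (hs : IsSection p f g 1 a) (ha : a < p)
    (hbf : ∀ n, (p : ℤ_[p]) ^ Nat.log p n * bf n = vdpB p f n) {n : ℕ} (hn : n ≠ 0) :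
    (p : ℤ_[p]) ^ Nat.log p n * bf (a + p * n) = g n - g ((n % p ^ Nat.log p n : ℕ)) := by
  obtain ⟨r, -, hrf⟩ := hs
  have hrf' : ∀ y, f (a + p * y) = r + p * g y := by simpa using hrf
  have hp1 := hp.out.one_lt
  apply mul_left_cancel₀ (PadicInt.pow_p_ne_zero 1)
  calc (p : ℤ_[p]) ^ 1 * (p ^ Nat.log p n * bf (a + p * n))
        = p ^ Nat.log p (a + p * n) * bf (a + p * n) := by
          rw [Nat.log_add_mul_of_lt hp1 ha hn]; ring
    _ = f ((a + p * n : ℕ)) - f ((a + p * (n % p ^ Nat.log p n) : ℕ)) := by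
          rw [hbf, vdpB_of_le (le_add_left (Nat.le_mul_of_pos_right p (Nat.pos_of_ne_zero hn))),
            Nat.add_mul_mod_pow_log hp1 ha hn]
    _ = p ^ 1 * (g n - g ((n % p ^ Nat.log p n : ℕ))) := by
          push_cast
          rw [hrf', hrf']
          ring

end FirstLevel

def ratPoints (p : ℕ) [Fact p.Prime] (S : Set ℚ) : Set ℤ_[p] :=
  {x | ∃ q ∈ S, (x : ℚ_[p]) = q}

section Aset

variable {l m s : ℕ}

lemma zero_mem_Pset {d : ℕ} (hd : 0 < d) : (0 : ℚ) ∈ Pset d l m :=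
  ⟨0, 0, le_rfl, by positivity, le_rfl, by positivity, by simp⟩

lemma zero_mem_ratPoints_Pset : (0 : ℤ_[p]) ∈ ratPoints p (Pset p l m) :=
  ⟨0, zero_mem_Pset hp.out.pos, by simp⟩

lemma add_mem_ratPoints_Aset_succ {x y z : ℤ_[p]} {r : ℕ} (hr : r < p) (hxy : x = r + p * y)
    (hx : x ∈ ratPoints p (Aset p l m s)) (hz : z ∈ ratPoints p (Pset p l m)) :
    y + z ∈ ratPoints p (Aset p l m (s + 1)) := by
  obtain ⟨qa, hqa, hxq⟩ := hx
  obtain ⟨qb, hqb, hzq⟩ := hz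
  have hy : (y : ℚ_[p]) = ((qa - r) / p : ℚ) := by
    have hp0 : (p : ℚ_[p]) ≠ 0 := Nat.cast_ne_zero.2 hp.out.ne_zero
    push_cast
    rw [eq_div_iff hp0, ← hxq, hxy]
    push_cast
    ring
  have hcop : ((qa - r) / p : ℚ).den.Coprime p := by
    apply Padic.coprime_den_of_norm_rat_le_one
    rw [← hy, PadicInt.padic_norm_e_of_padicInt]
    exact PadicInt.norm_le_one y
  refine ⟨(qa - r) / p + qb, ⟨qa, hqa, qb, hqb, r, by positivity, by exact_mod_cast hr,
    by simpa using hcop, by simp⟩, ?_⟩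
  push_cast
  rw [hy, hzq]
  push_cast
  ring

end Aset

def VdpCoeffsIn (p l m : ℕ) [Fact p.Prime] (g : ℤ_[p] → ℤ_[p]) (s : ℕ) : Prop :=
  ∃ bg : ℕ → ℤ_[p], (∀ n, (p : ℤ_[p]) ^ Nat.log p n * bg n = vdpB p g n) ∧
    (∀ n < p, bg n ∈ ratPoints p (Aset p l m s)) ∧
    (∀ n, p ≤ n → bg n ∈ ratPoints p (Pset p l m))

namespace VdpCoeffsIn

variable {l m s : ℕ} {f g h : ℤ_[p] → ℤ_[p]}

lemma of_isSection_one {a : ℕ} (hcf : VdpCoeffsIn p l m f s) (hs : IsSection p f g 1 a)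
    (ha : a < p) : VdpCoeffsIn p l m g (s + 1) := by
  obtain ⟨bf, hbf, hA, hP⟩ := hcf
  obtain ⟨r, hr, hbfa⟩ := hs.exists_vdp_coeff_eq ha hbf
  have hcoeff := fun n (hn : n ≠ 0) => hs.pow_log_mul_vdp_coeff_eq ha hbf hn
  have hPa : ∀ n ≠ 0, bf (a + p * n) ∈ ratPoints p (Pset p l m) := fun n hn =>
    hP _ ((Nat.le_mul_of_pos_right p (Nat.pos_of_ne_zero hn)).trans (Nat.le_add_left _ _))
  refine ⟨fun n => if n < p then g n else bf (a + p * n), fun n => ?_, fun n hn => ?_,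
    fun n hn => ?_⟩ <;> dsimp only
  · split_ifs with hn
    · rw [Nat.log_of_lt hn, pow_zero, one_mul, vdpB_of_lt hn]
    · rw [hcoeff n (by omega), vdpB_of_le (not_lt.1 hn)]
  · rw [if_pos hn]
    rcases eq_or_ne n 0 with rfl | hn0
    · simpa using add_mem_ratPoints_Aset_succ hr hbfa (hA a ha) zero_mem_ratPoints_Pset
    · have hgn := hcoeff n hn0
      rw [Nat.log_of_lt hn, pow_zero, one_mul, pow_zero, Nat.mod_one, Nat.cast_zero] at hgn
      rw [show g n = g 0 + bf (a + p * n) by rw [hgn]; ring]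
      exact add_mem_ratPoints_Aset_succ hr hbfa (hA a ha) (hPa n hn0)
  · rw [if_neg (not_lt.2 hn)]
    exact hPa n (by omega)

lemma of_isSection (hf : ∀ x y, ‖f x - f y‖ ≤ ‖x - y‖) (hcf : VdpCoeffsIn p l m f 0) :
    ∀ k m', m' < p ^ k → ∀ h, IsSection p f h k m' → VdpCoeffsIn p l m h k
  | 0, m', hm', h, hs => by
    obtain rfl : m' = 0 := by simpa using hm'
    rwa [hs.eq_of_level_zero]
  | k + 1, m', hm', h, hs => by
    obtain ⟨g, hg⟩ := exists_isSection hf k (m' % p ^ k)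
    have hgh : IsSection p g h 1 (m' / p ^ k) :=
      hg.isSection_of_add_mul (by rwa [Nat.mod_add_div])
    exact (of_isSection hf hcf k _ (Nat.mod_lt _ (pow_pos hp.out.pos k)) g hg).of_isSection_one
      hgh (Nat.div_lt_of_lt_mul (by rwa [← pow_succ]))

end VdpCoeffsIn

theorem first_level_coefficients_in_A_general (p : ℕ) [Fact p.Prime] (l m : ℕ)
    (f : PadicInt p → PadicInt p)
    (hf : ∀ x y : PadicInt p, ‖f x - f y‖ ≤ ‖x - y‖)
    -- `bf` is the sequence of reduced van der Put coefficients of `f`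
    (bf : ℕ → PadicInt p)
    (hbf : ∀ n : ℕ, (p : PadicInt p) ^ Nat.log p n * bf n = vdpB p f n)
    (hP : ∀ n : ℕ, ∃ q ∈ Pset p l m, (bf n : ℚ_[p]) = (q : ℚ_[p])) :
    ∀ k m' : ℕ, m' < p ^ k →
      ∀ h : PadicInt p → PadicInt p, IsSection p f h k m' →
        ∀ bh : ℕ → PadicInt p,
          (∀ n : ℕ, (p : PadicInt p) ^ Nat.log p n * bh n = vdpB p h n) →
          ∀ i : ℕ, i < p → ∃ q ∈ Aset p l m k, (bh i : ℚ_[p]) = (q : ℚ_[p]) := by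
  intro k m' hm' h hs bh hbh i hi
  obtain ⟨bh', hbh', hA, -⟩ :=
    VdpCoeffsIn.of_isSection hf ⟨bf, hbf, fun n _ => hP n, fun n _ => hP n⟩ k m' hm' h hs
  rw [eq_of_pow_log_mul_eq_vdpB hbh hbh']
  exact hA i hi

/-- If all reduced van der Put coefficients of a 1-Lipschitz `f : ℤ_p → ℤ_p` come from
rationals in `P^{l,m}`, then for every vertex `(k, m')` the first `p` reduced van der
Put coefficients of the section of `f` there come from rationals in `A^{l,m}_k`. -/
theorem first_level_coefficients_in_A (p : ℕ) [Fact p.Prime] (l m : ℕ) (hm : 1 ≤ m)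
    (f : PadicInt p → PadicInt p)
    (hf : ∀ x y : PadicInt p, ‖f x - f y‖ ≤ ‖x - y‖)
    -- `bf` is the sequence of reduced van der Put coefficients of `f`
    (bf : ℕ → PadicInt p)
    (hbf : ∀ n : ℕ, (p : PadicInt p) ^ Nat.log p n * bf n = vdpB p f n)
    (hP : ∀ n : ℕ, ∃ q ∈ Pset p l m, (bf n : ℚ_[p]) = (q : ℚ_[p])) :
    ∀ k m' : ℕ, m' < p ^ k →
      ∀ h : PadicInt p → PadicInt p, IsSection p f h k m' →
        ∀ bh : ℕ → PadicInt p,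
          (∀ n : ℕ, (p : PadicInt p) ^ Nat.log p n * bh n = vdpB p h n) →
          ∀ i : ℕ, i < p → ∃ q ∈ Aset p l m k, (bh i : ℚ_[p]) = (q : ℚ_[p]) :=
  first_level_coefficients_in_A_general p l m f hf bf hbf hP
end
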